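/- For every bounded finite counting message passing automaton (k-FCMPA) over Π, there is an equivalent GMSC program over Π whose size is polynomial in the size of the automaton; the program has one head predicate X_q per state q, terminal clauses encoding the initialization function via Boolean combinations of node labels, and iteration clauses encoding the transition function via graded modalities ◇_{=n} and ◇_{≥k}, such that for every finite pointed Π-labeled graph (G, w) and every n ∈ ℕ: G, w ⊨ X_qⁿ iff w is in state q at round n of the automaton. -/

import Mathlib

/-- A finite directed node-labeled graph: finite node set `V`, out-neighbour
finsets `adj v`, and a labeling of nodes by sets of node label symbols from `α`. -/
structure LGraph (α : Type) : Type 1 where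
  V : Type
  fintypeV : Fintype V
  adj : V → Finset V
  label : V → Set α

attribute [instance] LGraph.fintypeV

/-- Formulas of graded modal logic GML over node label symbols `α`:
`⊤`, labels, negation, conjunction, and graded diamonds `◇_{≥k}`. -/
inductive GML (α : Type) : Type where
  | top : GML α
  | lab : α → GML α
  | neg : GML α → GML α
  | and : GML α → GML α → GML α
  | dia : ℕ → GML α → GML α

/-- Truth of a GML formula at a node of a labeled graph; `dia k φ` (`◇_{≥k}φ`)
holds iff at least `k` out-neighbours satisfy `φ`. -/
def GML.sat {α : Type} (G : LGraph α) : GML α → G.V → Prop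
  | .top, _ => True
  | .lab p, v => p ∈ G.label v
  | .neg φ, v => ¬ GML.sat G φ v
  | .and φ ψ, v => GML.sat G φ v ∧ GML.sat G ψ v
  | .dia k φ, v => ∃ s : Finset G.V, s ⊆ G.adj v ∧ k ≤ s.card ∧ ∀ u ∈ s, GML.sat G φ u

/-- `⊥` as a GML formula. -/
def GML.bot {α : Type} : GML α := .neg .top

/-- `□φ := ¬◇_{≥1}¬φ`. -/
def GML.box {α : Type} (φ : GML α) : GML α := .neg (.dia 1 (.neg φ))

/-- `◇_{=n}φ := ◇_{≥n}φ ∧ ¬◇_{≥n+1}φ`. -/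
def GML.diaEq {α : Type} (n : ℕ) (φ : GML α) : GML α := .and (.dia n φ) (.neg (.dia (n + 1) φ))

/-- Schemata of GMSC over node label symbols `α` and head predicates (schema variables) `ν`. -/
inductive Schema (α ν : Type) : Type where
  | top : Schema α ν
  | lab : α → Schema α ν
  | var : ν → Schema α ν
  | neg : Schema α ν → Schema α ν
  | and : Schema α ν → Schema α ν → Schema α ν
  | dia : ℕ → Schema α ν → Schema α ν

/-- Substituting a GML formula for each head predicate of a schema. -/
def Schema.subst {α ν : Type} (σ : ν → GML α) : Schema α ν → GML α
  | .top => .top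
  | .lab p => .lab p
  | .var X => σ X
  | .neg φ => .neg (φ.subst σ)
  | .and φ ψ => .and (φ.subst σ) (ψ.subst σ)
  | .dia k φ => .dia k (φ.subst σ)

/-- A GMSC program over node label symbols `α` with head predicates `ν`:
terminal clauses `X(0) :− term X`, iteration clauses `X :− iter X`, and a set
`app` of appointed predicates. -/
structure Program (α ν : Type) where
  term : ν → GML α
  iter : ν → Schema α ν
  app : Set ν

/-- The `n`-th iteration formula `Xⁿ` of a head predicate `X`: `X⁰` is the terminal body,
and `X^{n+1}` is the iteration body with each head predicate `Y` replaced by `Yⁿ`. -/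
def Program.iterFormula {α ν : Type} (P : Program α ν) : ℕ → ν → GML α
  | 0 => P.term
  | n + 1 => fun X => (P.iter X).subst (P.iterFormula n)

/-- The program accepts `(G, w)` iff some appointed predicate's iteration formula is
true at `w` in some round. -/
def Program.accepts {α ν : Type} (P : Program α ν) (G : LGraph α) (w : G.V) : Prop :=
  ∃ X ∈ P.app, ∃ n : ℕ, GML.sat G (P.iterFormula n X) w

/-- A counting message passing automaton (CMPA) over node label symbols `α` with state
set `Q`: an initialization function from label sets to states, a transition function taking
the current state and the multiset of out-neighbour states, and accepting states `F`. -/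
structure CMPA (α Q : Type) where
  init : Set α → Q
  trans : Q → Multiset Q → Q
  F : Set Q

/-- The state of a node at each round: round 0 is given by the initialization function on
the node's labels, and round `n+1` applies the transition function to the node's round-`n`
state and the multiset of round-`n` states of its out-neighbours. -/
def CMPA.state {α Q : Type} (A : CMPA α Q) (G : LGraph α) : ℕ → G.V → Q
  | 0, v => A.init (G.label v)
  | n + 1, v => A.trans (A.state G n v) ((G.adj v).val.map (A.state G n))

/-- The CMPA accepts `(G, w)` iff `w` visits an accepting state at some round. -/
def CMPA.accepts {α Q : Type} (A : CMPA α Q) (G : LGraph α) (w : G.V) : Prop :=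
  ∃ n : ℕ, A.state G n w ∈ A.F

/-- The `k`-projection of a multiset: every multiplicity is capped at `k`. -/
noncomputable def capProj {β : Type*} (k : ℕ) (M : Multiset β) : Multiset β :=
  letI := Classical.decEq β
  M.toFinset.val.bind fun a => Multiset.replicate (min k (M.count a)) a

/-- The size of a GML formula: occurrences of label symbols and logical operators,
with each diamond `◇_{≥k}` contributing `k`. -/
def GML.gsize {α : Type} : GML α → ℕ
  | .top => 1
  | .lab _ => 1
  | .neg φ => φ.gsize + 1
  | .and φ ψ => φ.gsize + ψ.gsize + 1
  | .dia k φ => φ.gsize + k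

/-- The size of a GMSC schema, analogously. -/
def Schema.gsize {α ν : Type} : Schema α ν → ℕ
  | .top => 1
  | .lab _ => 1
  | .var _ => 1
  | .neg φ => φ.gsize + 1
  | .and φ ψ => φ.gsize + ψ.gsize + 1
  | .dia k φ => φ.gsize + k

/-- The size of a GMSC program: the size of the label alphabet plus the sizes of all
terminal and iteration clause bodies. -/
def progSize {α ν : Type} [Fintype α] [Fintype ν] (P : Program α ν) : ℕ :=
  Fintype.card α + ∑ X : ν, ((P.term X).gsize + (P.iter X).gsize)

/-! A node's next state depends only on its own state and, for each state `p`, on the number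
of out-neighbours in state `p` capped at `k`. Such a configuration is described by `◇_{=m}`
(for `m < k`) or `◇_{≥k}` applied to `X_p`, so the iteration clause of `X_q` is the disjunction
of the `|Q|·(k+1)^|Q|` configurations leading to `q`; likewise the terminal clause is the
disjunction of the at most `2^|α|` label sets initialised to `q`. Both have size polynomial in
the look-up tables of the automaton. -/

open Finset

namespace GML

variable {α : Type}

def or (φ ψ : GML α) : GML α := .neg (.and (.neg φ) (.neg ψ))

def listAnd : List (GML α) → GML α
  | [] => .top
  | φ :: l => .and φ (listAnd l)

def listOr : List (GML α) → GML α
  | [] => .bot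
  | φ :: l => .or φ (listOr l)

section Semantics

variable {G : LGraph α} {v : G.V}

theorem sat_or {φ ψ : GML α} : sat G (φ.or ψ) v ↔ sat G φ v ∨ sat G ψ v := by
  simp only [GML.or, sat]
  tauto

theorem sat_listAnd (l : List (GML α)) : sat G (listAnd l) v ↔ ∀ φ ∈ l, sat G φ v := by
  induction l with
  | nil => simp [listAnd, sat]
  | cons φ l ih => simp [listAnd, sat, ih]

theorem sat_listOr (l : List (GML α)) : sat G (listOr l) v ↔ ∃ φ ∈ l, sat G φ v := by
  induction l with
  | nil => simp [listOr, GML.bot, sat]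
  | cons φ l ih => simp [listOr, sat_or, ih]

open scoped Classical in
theorem sat_dia_iff_le_card {k : ℕ} {φ : GML α} :
    sat G (.dia k φ) v ↔ k ≤ #{u ∈ G.adj v | sat G φ u} := by
  constructor
  · rintro ⟨s, hs, hk, hsat⟩
    exact hk.trans (card_le_card fun u hu => mem_filter.mpr ⟨hs hu, hsat u hu⟩)
  · exact fun h => ⟨_, filter_subset _ _, h, fun u hu => (mem_filter.mp hu).2⟩

open scoped Classical in
theorem sat_diaEq_iff_card_eq {n : ℕ} {φ : GML α} :
    sat G (diaEq n φ) v ↔ #{u ∈ G.adj v | sat G φ u} = n := by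
  rw [diaEq, sat, sat, sat_dia_iff_le_card, sat_dia_iff_le_card]
  omega

end Semantics

theorem gsize_listAnd_le (l : List (GML α)) (b : ℕ) (h : ∀ φ ∈ l, φ.gsize ≤ b) :
    (listAnd l).gsize ≤ 1 + l.length * (b + 1) := by
  induction l with
  | nil => simp [listAnd, gsize]
  | cons φ l ih =>
    have := h φ List.mem_cons_self
    have := ih fun ψ hψ => h ψ (List.mem_cons_of_mem _ hψ)
    simp only [listAnd, gsize, List.length_cons]
    nlinarith

theorem gsize_listOr_le (l : List (GML α)) (b : ℕ) (h : ∀ φ ∈ l, φ.gsize ≤ b) :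
    (listOr l).gsize ≤ 2 + l.length * (b + 4) := by
  induction l with
  | nil => simp [listOr, GML.bot, gsize]
  | cons φ l ih =>
    have := h φ List.mem_cons_self
    have := ih fun ψ hψ => h ψ (List.mem_cons_of_mem _ hψ)
    simp only [listOr, GML.or, gsize, List.length_cons]
    nlinarith

end GML

namespace Schema

variable {α ν : Type}

def or (φ ψ : Schema α ν) : Schema α ν := .neg (.and (.neg φ) (.neg ψ))

def listAnd : List (Schema α ν) → Schema α ν
  | [] => .top
  | φ :: l => .and φ (listAnd l)

def listOr : List (Schema α ν) → Schema α ν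
  | [] => .neg .top
  | φ :: l => .or φ (listOr l)

theorem subst_listAnd (σ : ν → GML α) (l : List (Schema α ν)) :
    (listAnd l).subst σ = GML.listAnd (l.map (subst σ)) := by
  induction l with
  | nil => rfl
  | cons φ l ih => simp [listAnd, GML.listAnd, subst, ih]

theorem subst_listOr (σ : ν → GML α) (l : List (Schema α ν)) :
    (listOr l).subst σ = GML.listOr (l.map (subst σ)) := by
  induction l with
  | nil => rfl
  | cons φ l ih => simp [listOr, GML.listOr, Schema.or, GML.or, subst, ih]

theorem gsize_listAnd_le (l : List (Schema α ν)) (b : ℕ) (h : ∀ φ ∈ l, φ.gsize ≤ b) :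
    (listAnd l).gsize ≤ 1 + l.length * (b + 1) := by
  induction l with
  | nil => simp [listAnd, gsize]
  | cons φ l ih =>
    have := h φ List.mem_cons_self
    have := ih fun ψ hψ => h ψ (List.mem_cons_of_mem _ hψ)
    simp only [listAnd, gsize, List.length_cons]
    nlinarith

theorem gsize_listOr_le (l : List (Schema α ν)) (b : ℕ) (h : ∀ φ ∈ l, φ.gsize ≤ b) :
    (listOr l).gsize ≤ 2 + l.length * (b + 4) := by
  induction l with
  | nil => simp [listOr, gsize]
  | cons φ l ih =>
    have := h φ List.mem_cons_self
    have := ih fun ψ hψ => h ψ (List.mem_cons_of_mem _ hψ)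
    simp only [listOr, Schema.or, gsize, List.length_cons]
    nlinarith

end Schema

section Multisets

variable {β : Type}

def multisetOfCounts [Fintype β] (g : β → ℕ) : Multiset β :=
  ∑ b, Multiset.replicate (g b) b

theorem count_multisetOfCounts [Fintype β] [DecidableEq β] (g : β → ℕ) (b : β) :
    (multisetOfCounts g).count b = g b := by
  simp [multisetOfCounts, Multiset.count_sum', Multiset.count_replicate]

theorem count_capProj [DecidableEq β] (k : ℕ) (M : Multiset β) (b : β) :
    (capProj k M).count b = min k (M.count b) := by
  simp only [capProj, Multiset.count_bind, Multiset.count_replicate]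
  rw [← sum_eq_multiset_sum, sum_ite_eq']
  split_ifs with h
  · congr
  · simp [Multiset.count_eq_zero_of_notMem (by simpa using h)]

theorem capProj_eq_multisetOfCounts [Fintype β] [DecidableEq β] (k : ℕ) (M : Multiset β) :
    capProj k M = multisetOfCounts fun b => min k (M.count b) := by
  ext b
  rw [count_capProj, count_multisetOfCounts]

end Multisets

noncomputable section Construction

variable {α Q : Type} [Fintype α] [DecidableEq α] [Fintype Q] [DecidableEq Q]

def labelsEqFormula (S : Finset α) : GML α :=
  .listAnd ((univ : Finset α).toList.map fun p => if p ∈ S then .lab p else .neg (.lab p))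

def cappedCountSchema (k : ℕ) (p : Q) (m : ℕ) : Schema α Q :=
  if m < k then .and (.dia m (.var p)) (.neg (.dia (m + 1) (.var p))) else .dia k (.var p)

/-- A configuration `c` records the current state `c.1` and, for each state `p`, the number
`c.2 p` of out-neighbours in state `p`, capped at `k`. -/
def configSchema (k : ℕ) (c : Q × (Q → Fin (k + 1))) : Schema α Q :=
  .and (.var c.1) (.listAnd ((univ : Finset Q).toList.map fun p => cappedCountSchema k p (c.2 p)))

namespace CMPA

def termFormula (A : CMPA α Q) (q : Q) : GML α :=
  .listOr (({S | A.init S = q} : Finset (Finset α)).toList.map labelsEqFormula)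

def iterSchema (A : CMPA α Q) (k : ℕ) (q : Q) : Schema α Q :=
  .listOr (({c | A.trans c.1 (multisetOfCounts fun p => (c.2 p : ℕ)) = q} :
    Finset (Q × (Q → Fin (k + 1)))).toList.map (configSchema k))

def toProgram (A : CMPA α Q) (k : ℕ) : Program α Q := ⟨A.termFormula, A.iterSchema k, A.F⟩

end CMPA

end Construction

section Correctness

variable {α Q : Type} {G : LGraph α}

theorem sat_labelsEqFormula [Fintype α] [DecidableEq α] (S : Finset α) {v : G.V} :
    GML.sat G (labelsEqFormula S) v ↔ (S : Set α) = G.label v := by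
  simp only [labelsEqFormula, GML.sat_listAnd, List.forall_mem_map, mem_toList, mem_univ,
    forall_const, Set.ext_iff]
  refine forall_congr' fun p => ?_
  split_ifs with hp <;> simp [GML.sat, hp]

theorem CMPA.sat_termFormula [Fintype α] [DecidableEq α] [DecidableEq Q] (A : CMPA α Q) (q : Q)
    {v : G.V} :
    GML.sat G (A.termFormula q) v ↔ A.init (G.label v) = q := by
  simp only [CMPA.termFormula, GML.sat_listOr, List.mem_map, exists_exists_and_eq_and,
    mem_toList, mem_filter, mem_univ, true_and, sat_labelsEqFormula]
  constructor
  · rintro ⟨S, hS, hSv⟩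
    rwa [← hSv]
  · intro h
    obtain ⟨S, hS⟩ := (G.label v).toFinite.exists_finset_coe
    exact ⟨S, hS ▸ h, hS⟩

open scoped Classical in
theorem card_filter_sat_eq_count [DecidableEq Q] {st : G.V → Q} {F : Q → GML α}
    (hF : ∀ p u, GML.sat G (F p) u ↔ st u = p) (v : G.V) (p : Q) :
    #{u ∈ G.adj v | GML.sat G (F p) u} = ((G.adj v).val.map st).count p := by
  rw [Multiset.count_map, card_def, filter_val]
  simp [hF, eq_comm]

theorem sat_subst_cappedCountSchema [DecidableEq Q] {st : G.V → Q} {F : Q → GML α}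
    (hF : ∀ p u, GML.sat G (F p) u ↔ st u = p) {k m : ℕ} (hm : m ≤ k) (p : Q) (v : G.V) :
    GML.sat G ((cappedCountSchema k p m : Schema α Q).subst F) v ↔
      min k (((G.adj v).val.map st).count p) = m := by
  rw [cappedCountSchema]
  split_ifs with hmk
  · change GML.sat G (GML.diaEq m (F p)) v ↔ _
    rw [GML.sat_diaEq_iff_card_eq, card_filter_sat_eq_count hF]
    omega
  · rw [Schema.subst, Schema.subst, GML.sat_dia_iff_le_card, card_filter_sat_eq_count hF]
    omega

theorem sat_subst_configSchema [Fintype Q] [DecidableEq Q] {st : G.V → Q} {F : Q → GML α}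
    (hF : ∀ p u, GML.sat G (F p) u ↔ st u = p) {k : ℕ} (c : Q × (Q → Fin (k + 1)))
    (v : G.V) :
    GML.sat G ((configSchema k c : Schema α Q).subst F) v ↔
      st v = c.1 ∧ ∀ p, min k (((G.adj v).val.map st).count p) = c.2 p := by
  simp only [configSchema, Schema.subst, GML.sat, Schema.subst_listAnd, List.map_map,
    GML.sat_listAnd, List.forall_mem_map, mem_toList, mem_univ, forall_const, Function.comp_apply,
    hF, sat_subst_cappedCountSchema hF (Fin.is_le _)]

theorem CMPA.sat_subst_iterSchema [Fintype Q] [DecidableEq Q] (A : CMPA α Q) {k : ℕ}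
    (hA : ∀ q M, A.trans q M = A.trans q (capProj k M)) {st : G.V → Q} {F : Q → GML α}
    (hF : ∀ p u, GML.sat G (F p) u ↔ st u = p) (q : Q) (v : G.V) :
    GML.sat G ((A.iterSchema k q).subst F) v ↔ A.trans (st v) ((G.adj v).val.map st) = q := by
  simp only [iterSchema, Schema.subst_listOr, List.map_map, GML.sat_listOr, List.mem_map,
    exists_exists_and_eq_and, mem_toList, mem_filter, mem_univ, true_and, Function.comp_apply,
    sat_subst_configSchema hF]
  rw [hA, capProj_eq_multisetOfCounts]
  constructor
  · rintro ⟨⟨s, f⟩, hc, rfl, hcount⟩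
    rwa [show (fun p => min k _) = fun p => (f p : ℕ) from funext hcount]
  · intro h
    exact ⟨(st v, fun p => ⟨min k _, Nat.lt_succ_of_le (min_le_left _ _)⟩), h, rfl,
      fun _ => rfl⟩

theorem CMPA.sat_iterFormula_toProgram [Fintype α] [DecidableEq α] [Fintype Q] [DecidableEq Q]
    (A : CMPA α Q) {k : ℕ}
    (hA : ∀ q M, A.trans q M = A.trans q (capProj k M)) (n : ℕ) (q : Q) (w : G.V) :
    GML.sat G ((A.toProgram k).iterFormula n q) w ↔ A.state G n w = q := by
  induction n generalizing q w with
  | zero => exact A.sat_termFormula q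
  | succ n ih => exact A.sat_subst_iterSchema hA (fun p u => ih p u) q w

end Correctness

section Size

variable {α Q : Type}

theorem gsize_labelsEqFormula_le [Fintype α] [DecidableEq α] (S : Finset α) :
    (labelsEqFormula S).gsize ≤ 1 + 3 * Fintype.card α := by
  have hlit : ∀ φ ∈ (univ : Finset α).toList.map
      (fun p => if p ∈ S then GML.lab p else .neg (.lab p)), φ.gsize ≤ 2 := by
    simp only [List.forall_mem_map, mem_toList, mem_univ, forall_const]
    intro p
    split_ifs <;> simp [GML.gsize]
  have := GML.gsize_listAnd_le _ _ hlit
  simp only [List.length_map, length_toList, card_univ] at this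
  rw [labelsEqFormula]
  omega

theorem CMPA.gsize_termFormula_le [Fintype α] [DecidableEq α] [DecidableEq Q]
    (A : CMPA α Q) (q : Q) :
    (A.termFormula q).gsize ≤ 2 + 2 ^ Fintype.card α * (3 * Fintype.card α + 5) := by
  have hlen : (({S | A.init S = q} : Finset (Finset α)).toList.map labelsEqFormula).length ≤
      2 ^ Fintype.card α := by
    simpa [Fintype.card_finset] using card_filter_le (univ : Finset (Finset α)) _
  calc (A.termFormula q).gsize ≤ 2 + _ * (1 + 3 * Fintype.card α + 4) :=
        GML.gsize_listOr_le _ _ (List.forall_mem_map.mpr fun S _ => gsize_labelsEqFormula_le S)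
    _ ≤ 2 + 2 ^ Fintype.card α * (3 * Fintype.card α + 5) := by
        rw [show 1 + 3 * Fintype.card α + 4 = 3 * Fintype.card α + 5 by ring]
        gcongr

theorem gsize_cappedCountSchema_le {k m : ℕ} (hm : m ≤ k) (p : Q) :
    (cappedCountSchema k p m : Schema α Q).gsize ≤ 2 * k + 5 := by
  rw [cappedCountSchema]
  split_ifs <;> simp only [Schema.gsize] <;> omega

theorem gsize_configSchema_le [Fintype Q] {k : ℕ} (c : Q × (Q → Fin (k + 1))) :
    (configSchema k c : Schema α Q).gsize ≤ 3 + Fintype.card Q * (2 * k + 6) := by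
  have hcount : ∀ φ ∈ (univ : Finset Q).toList.map
      (fun p => (cappedCountSchema k p (c.2 p) : Schema α Q)), φ.gsize ≤ 2 * k + 5 := by
    simpa using fun p => gsize_cappedCountSchema_le (Fin.is_le (c.2 p)) p
  have := Schema.gsize_listAnd_le _ _ hcount
  simp only [List.length_map, length_toList, card_univ] at this
  simp only [configSchema, Schema.gsize]
  nlinarith

theorem CMPA.gsize_iterSchema_le [Fintype Q] [DecidableEq Q] (A : CMPA α Q) (k : ℕ) (q : Q) :
    (A.iterSchema k q).gsize ≤
      2 + Fintype.card Q * (k + 1) ^ Fintype.card Q * (7 + Fintype.card Q * (2 * k + 6)) := by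
  have hlen : (({c | A.trans c.1 (multisetOfCounts fun p => (c.2 p : ℕ)) = q} :
      Finset (Q × (Q → Fin (k + 1)))).toList.map (configSchema (α := α) k)).length ≤
      Fintype.card Q * (k + 1) ^ Fintype.card Q := by
    simpa using card_filter_le (univ : Finset (Q × (Q → Fin (k + 1)))) _
  calc (A.iterSchema k q).gsize ≤ 2 + _ * (3 + Fintype.card Q * (2 * k + 6) + 4) :=
        Schema.gsize_listOr_le _ _ (List.forall_mem_map.mpr fun c _ => gsize_configSchema_le c)
    _ ≤ _ := by
        rw [show 3 + Fintype.card Q * (2 * k + 6) + 4 = 7 + Fintype.card Q * (2 * k + 6) by ring]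
        gcongr

end Size

/-- The size of the look-up tables of a `k`-bounded CMPA: the initialization function has one
entry per label set, the transition function one per state and capped neighbour count. -/
def tableSize (α Q : Type) [Fintype α] [Fintype Q] (k : ℕ) : ℕ :=
  2 ^ Fintype.card α + Fintype.card Q * (k + 1) ^ Fintype.card Q

section PolynomialBound

variable {α Q : Type} [Fintype α] [Fintype Q]

theorem card_le_tableSize_left (k : ℕ) : Fintype.card α + 1 ≤ tableSize α Q k :=
  Nat.lt_two_pow_self.trans_le (Nat.le_add_right _ _)

theorem card_le_tableSize_right (k : ℕ) : Fintype.card Q ≤ tableSize α Q k :=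
  (Nat.le_mul_of_pos_right _ (Nat.pow_pos k.succ_pos)).trans (Nat.le_add_left _ _)

theorem one_le_tableSize (k : ℕ) : 1 ≤ tableSize α Q k :=
  (card_le_tableSize_left k).trans' (Nat.le_add_left _ _)

variable [DecidableEq α] [DecidableEq Q]

theorem CMPA.gsize_clauses_le (A : CMPA α Q) (k : ℕ) (q : Q) :
    (A.termFormula q).gsize + (A.iterSchema k q).gsize ≤ 22 * tableSize α Q k ^ 3 := by
  set a := Fintype.card α
  set m := Fintype.card Q
  set N := tableSize α Q k
  have hm : 1 ≤ m := Fintype.card_pos_iff.mpr ⟨q⟩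
  have haN : a + 1 ≤ N := card_le_tableSize_left k
  have hmN : m ≤ N := card_le_tableSize_right k
  have hkN : k + 1 ≤ N :=
    calc k + 1 ≤ (k + 1) ^ m := Nat.le_self_pow (by omega) _
      _ ≤ m * (k + 1) ^ m := Nat.le_mul_of_pos_left _ hm
      _ ≤ N := Nat.le_add_left _ _
  have hterm : (A.termFormula q).gsize ≤ 2 + N * (5 * N) :=
    (A.gsize_termFormula_le q).trans (by gcongr; exacts [Nat.le_add_right _ _, by omega])
  have hiter : (A.iterSchema k q).gsize ≤ 2 + N * (7 + N * (6 * N)) :=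
    (A.gsize_iterSchema_le k q).trans (by gcongr; exacts [Nat.le_add_left _ _, by omega])
  have hN1 : 1 ≤ N := one_le_tableSize k
  have hN2 : N ≤ N ^ 2 := Nat.le_self_pow two_ne_zero N
  have hN3 : N ^ 2 ≤ N ^ 3 := Nat.pow_le_pow_right (by omega) (by norm_num)
  nlinarith

theorem CMPA.progSize_toProgram_le (A : CMPA α Q) (k : ℕ) :
    progSize (A.toProgram k) ≤ 23 * tableSize α Q k ^ 4 := by
  set N := tableSize α Q k
  have hN4 : N ≤ N ^ 4 := Nat.le_self_pow (by norm_num) N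
  calc progSize (A.toProgram k)
      = Fintype.card α + ∑ q, ((A.termFormula q).gsize + (A.iterSchema k q).gsize) := rfl
    _ ≤ N + ∑ _q : Q, 22 * N ^ 3 :=
        add_le_add (by have := card_le_tableSize_left (α := α) (Q := Q) k; omega)
          (sum_le_sum fun q _ => A.gsize_clauses_le k q)
    _ ≤ N + N * (22 * N ^ 3) := by
        rw [sum_const, card_univ, smul_eq_mul]
        gcongr
        exact card_le_tableSize_right k
    _ ≤ 23 * N ^ 4 := by nlinarith

end PolynomialBound

/-- There is a uniform polynomial bound such that every `k`-bounded finite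
CMPA (states `Q`, transition invariant under capping multiplicities at `k`) over a finite
alphabet `α` has an equivalent GMSC program over `α` with one head predicate per state, with
the states of `F` appointed, whose `n`-th iteration formula for `q` is true at `w` exactly
when the automaton is in state `q` at `w` at round `n`, and whose size is polynomial in the
size `2^|α| + |Q|·(k+1)^|Q|` of the automaton (viewed as look-up tables). -/
theorem bounded_fcmpa_to_gmsc_polynomial :
    ∃ c : ℕ, ∀ (α : Type) [Fintype α] (Q : Type) [Fintype Q] (k : ℕ) (A : CMPA α Q),
      (∀ (q : Q) (M : Multiset Q), A.trans q M = A.trans q (capProj k M)) →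
      ∃ P : Program α Q,
        P.app = A.F ∧
        (∀ (G : LGraph α) (w : G.V) (n : ℕ) (q : Q),
          GML.sat G (P.iterFormula n q) w ↔ A.state G n w = q) ∧
        progSize P ≤
          c * (2 ^ Fintype.card α + Fintype.card Q * (k + 1) ^ Fintype.card Q) ^ c := by
  refine ⟨23, fun α _ Q _ k A hA => ?_⟩
  classical
  refine ⟨A.toProgram k, rfl, fun G w n q => A.sat_iterFormula_toProgram hA n q w, ?_⟩
  calc progSize (A.toProgram k) ≤ 23 * tableSize α Q k ^ 4 := A.progSize_toProgram_le k
    _ ≤ 23 * tableSize α Q k ^ 23 := by gcongr; exacts [one_le_tableSize k, by norm_num]
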